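/- arXiv:math/9912243 — 7 statements merged into one kernel-verified Lean document; each statement's English description precedes it below -/
import Mathlib

section
/- For every Lagrangian subspace 𝔥' ⊆ 𝔤, the element r = (p₊ ⊗ id)(t) lies in the subspace 𝔤₊ ⊗ 𝔤₊ + 𝔤 ⊗ 𝔥' + 𝔥' ⊗ 𝔤 of 𝔤 ⊗ 𝔤. -/
open TensorProduct

variable (k : Type*) [Field k]
variable (g : Type*) [AddCommGroup g] [Module k g]

/-- The subspace `U ⊗ V` of `g ⊗ g` spanned by elementary tensors `u ⊗ v`, `u ∈ U`, `v ∈ V`. -/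
def tsub (U V : Submodule k g) : Submodule k (g ⊗[k] g) :=
  Submodule.span k {z | ∃ u ∈ U, ∃ v ∈ V, z = u ⊗ₜ[k] v}

/-- A subspace is Lagrangian when it equals its own orthogonal complement. -/
def IsLagrangian (B : g →ₗ[k] g →ₗ[k] k) (W : Submodule k g) : Prop :=
  ∀ x : g, x ∈ W ↔ ∀ w ∈ W, B w x = 0

/-- The contraction `(⟨x,·⟩ ⊗ id)(t)` of a 2-tensor against `x` in the first factor. -/
noncomputable def contractFst (B : g →ₗ[k] g →ₗ[k] k) (x : g) : g ⊗[k] g →ₗ[k] g :=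
  (TensorProduct.lid k g).toLinearMap ∘ₗ TensorProduct.map (B x) LinearMap.id

/-!
Operators move across the canonical element: `(A ⊗ 1) t = (1 ⊗ A') t` whenever `A'` is the
`B`-adjoint of `A`. Since `𝔤₊` and `𝔤₋` are isotropic, the adjoint of `p₊` is `1 - p₊`. Choose a
projection `f` onto `𝔥'` that maps `𝔤₊` into `𝔤₊ ∩ 𝔥'`, with adjoint `f'`; then
`r = (p₊ f ⊗ p₊) t + (p₊ f p₊ ⊗ 1) t + (p₊ ⊗ (1 - f')) t`. The first term lies in `𝔤₊ ⊗ 𝔤₊`,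
the second in `𝔥' ⊗ 𝔤` because `p₊ f p₊ = f p₊` has values in `𝔥'`, and the third in `𝔤 ⊗ 𝔥'`
because `1 - f'` has values in `𝔥'^⊥ = 𝔥'`.
-/

open LinearMap (IsAdjointPair)

section Projection

variable {K V : Type*} [DivisionRing K] [AddCommGroup V] [Module K V]

theorem Submodule.exists_projection_mapsTo (H W : Submodule K V) :
    ∃ f : V →ₗ[K] V, (∀ x, f x ∈ H) ∧ (∀ x ∈ H, f x = x) ∧ ∀ x ∈ W, f x ∈ W := by
  obtain ⟨M, hdisj, hsup⟩ := IsModularLattice.exists_disjoint_and_sup_eq (inf_le_left : W ⊓ H ≤ W)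
  have hMH : Disjoint M H := by
    rw [disjoint_iff, ← inf_eq_left.mpr (hsup ▸ le_sup_right : M ≤ W), inf_assoc]
    exact disjoint_iff.mp hdisj.symm
  obtain ⟨D, hMD, hDH⟩ := hMH.exists_isCompl
  refine ⟨H.projection D hDH.symm, H.projection_apply_mem hDH.symm,
    fun x hx => H.projection_apply_of_mem_left hDH.symm hx, ?_⟩
  intro x hx
  rw [← hsup] at hx
  obtain ⟨a, ha, m, hm, rfl⟩ := Submodule.mem_sup.mp hx
  rw [map_add, H.projection_apply_of_mem_left hDH.symm ha.2,
    H.projection_apply_of_mem_right hDH.symm (hMD hm), add_zero]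
  exact ha.1

end Projection

section BilinearForm

variable {k g}
variable {B : g →ₗ[k] g →ₗ[k] k}

@[simp]
theorem contractFst_tmul (x a b : g) : contractFst k g B x (a ⊗ₜ b) = B x a • b := by
  simp [contractFst]

theorem contractFst_map_id (C : g →ₗ[k] g) (x : g) (s : g ⊗[k] g) :
    contractFst k g B x (map LinearMap.id C s) = C (contractFst k g B x s) := by
  induction s using TensorProduct.induction_on with
  | zero => simp
  | tmul a b => simp
  | add u v hu hv => simp only [map_add, hu, hv]

theorem contractFst_map_of_isAdjointPair {A A' : g →ₗ[k] g} (h : IsAdjointPair B B A' A)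
    (x : g) (s : g ⊗[k] g) :
    contractFst k g B x (map A LinearMap.id s) = contractFst k g B (A' x) s := by
  induction s using TensorProduct.induction_on with
  | zero => simp
  | tmul a b => simp [h x a]
  | add u v hu hv => simp only [map_add, hu, hv]

theorem contractFst_eq_dualTensorHom (x : g) (s : g ⊗[k] g) :
    contractFst k g B x s = dualTensorHom k g g (B.flip.rTensor g s) x := by
  induction s using TensorProduct.induction_on with
  | zero => simp
  | tmul a b => simp
  | add u v hu hv => simp only [map_add, LinearMap.add_apply, hu, hv]

theorem eq_of_forall_contractFst_eq [FiniteDimensional k g] (hB : B.SeparatingRight)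
    {s s' : g ⊗[k] g} (h : ∀ x, contractFst k g B x s = contractFst k g B x s') : s = s' := by
  have hflip : Function.Injective B.flip :=
    LinearMap.ker_eq_bot.mp (LinearMap.separatingRight_iff_flip_ker_eq_bot.mp hB)
  refine Module.Flat.rTensor_preserves_injective_linearMap _ hflip
    ((dualTensorHomEquiv k g g).injective (LinearMap.ext fun x => ?_))
  simpa [contractFst_eq_dualTensorHom] using h x

theorem map_id_eq_map_of_isAdjointPair [FiniteDimensional k g] (hB : B.SeparatingRight)
    {t : g ⊗[k] g} (ht : ∀ x, contractFst k g B x t = x) {A A' : g →ₗ[k] g}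
    (h : IsAdjointPair B B A' A) : map LinearMap.id A' t = map A LinearMap.id t :=
  eq_of_forall_contractFst_eq hB fun x => by
    rw [contractFst_map_id, contractFst_map_of_isAdjointPair h, ht, ht]

theorem map_eq_map_comp_of_isAdjointPair [FiniteDimensional k g] (hB : B.SeparatingRight)
    {t : g ⊗[k] g} (ht : ∀ x, contractFst k g B x t = x) (A : g →ₗ[k] g) {C C' : g →ₗ[k] g}
    (h : IsAdjointPair B B C C') : map A C t = map (A ∘ₗ C') LinearMap.id t := by
  have := congrArg (map A LinearMap.id) (map_id_eq_map_of_isAdjointPair hB ht h)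
  simpa only [map_map, LinearMap.comp_id, LinearMap.id_comp] using this

theorem map_eq_add_add_of_isAdjointPair [FiniteDimensional k g] (hB : B.SeparatingRight)
    {t : g ⊗[k] g} (ht : ∀ x, contractFst k g B x t = x) {P f f' : g →ₗ[k] g}
    (hP : IsAdjointPair B B (LinearMap.id - P : g →ₗ[k] g) P) (hf : IsAdjointPair B B f' f) :
    map P LinearMap.id t = map (P ∘ₗ f) P t + map ((P ∘ₗ f) ∘ₗ P) LinearMap.id t +
      map P (LinearMap.id - f') t :=
  calc map P LinearMap.id t = map P f' t + map P (LinearMap.id - f') t := by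
        rw [← LinearMap.add_apply, ← map_add_right, add_sub_cancel]
    _ = map (P ∘ₗ f) P t + map (P ∘ₗ f) (LinearMap.id - P) t + map P (LinearMap.id - f') t := by
        rw [map_eq_map_comp_of_isAdjointPair hB ht P hf,
          ← LinearMap.add_apply (map (P ∘ₗ f) P), ← map_add_right, add_sub_cancel]
    _ = _ := by rw [map_eq_map_comp_of_isAdjointPair hB ht _ hP]

theorem map_mem_tsub {U V : Submodule k g} {A C : g →ₗ[k] g} (hA : ∀ x, A x ∈ U)
    (hC : ∀ x, C x ∈ V) (s : g ⊗[k] g) : map A C s ∈ tsub k g U V := by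
  induction s using TensorProduct.induction_on with
  | zero => simp
  | tmul a b => exact Submodule.subset_span ⟨A a, hA a, C b, hC b, rfl⟩
  | add u v hu hv => simpa only [map_add] using add_mem hu hv

theorem isAdjointPair_id_sub_of_isotropic {gp gm : Submodule k g}
    (hgp : ∀ a ∈ gp, ∀ b ∈ gp, B a b = 0) (hgm : ∀ a ∈ gm, ∀ b ∈ gm, B a b = 0)
    (hcodisj : Codisjoint gp gm) {pp : g →ₗ[k] g} (hpp : ∀ x ∈ gp, pp x = x)
    (hpm : ∀ x ∈ gm, pp x = 0) : IsAdjointPair B B (LinearMap.id - pp : g →ₗ[k] g) pp := by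
  have hdec : ∀ x, ∃ a ∈ gp, ∃ b ∈ gm, a + b = x := fun x =>
    Submodule.mem_sup.mp (hcodisj.eq_top ▸ Submodule.mem_top)
  intro x y
  obtain ⟨a, ha, b, hb, rfl⟩ := hdec x
  obtain ⟨a', ha', b', hb', rfl⟩ := hdec y
  simp [hpp a ha, hpp a' ha', hpm b hb, hpm b' hb', hgp a ha a' ha', hgm b hb b' hb']

theorem id_sub_mem_of_isAdjointPair (hsymm : ∀ x y, B x y = B y x) {H : Submodule k g}
    (hH : ∀ x, (∀ w ∈ H, B w x = 0) → x ∈ H) {f f' : g →ₗ[k] g} (hf : ∀ x ∈ H, f x = x)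
    (h : IsAdjointPair B B f' f) (x : g) : (LinearMap.id - f' : g →ₗ[k] g) x ∈ H :=
  hH _ fun w hw => by
    rw [LinearMap.sub_apply, LinearMap.id_apply, map_sub, hsymm w (f' x), h, hf w hw, hsymm,
      sub_self]

end BilinearForm

theorem stmt2 [FiniteDimensional k g] (B : g →ₗ[k] g →ₗ[k] k)
    (hsymm : ∀ x y : g, B x y = B y x)
    (hnondeg : ∀ x : g, (∀ y : g, B x y = 0) → x = 0)
    -- `t` is the canonical element of `B`
    (t : g ⊗[k] g) (ht : ∀ x : g, contractFst k g B x t = x)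
    -- `𝔤₊`, `𝔤₋` Lagrangian with `𝔤 = 𝔤₊ ⊕ 𝔤₋`
    (gp gm : Submodule k g) (hgp : IsLagrangian k g B gp) (hgm : IsLagrangian k g B gm)
    (hcompl : IsCompl gp gm)
    -- `p₊` is the projection onto `𝔤₊` along `𝔤₋`
    (pp : g →ₗ[k] g) (hpp : ∀ x ∈ gp, pp x = x) (hpm : ∀ x ∈ gm, pp x = 0) :
    -- for every Lagrangian subspace `𝔥'`, `r = (p₊ ⊗ id)(t) ∈ 𝔤₊ ⊗ 𝔤₊ + 𝔤 ⊗ 𝔥' + 𝔥' ⊗ 𝔤`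
    ∀ H' : Submodule k g, IsLagrangian k g B H' →
      TensorProduct.map pp LinearMap.id t ∈
        tsub k g gp gp ⊔ tsub k g ⊤ H' ⊔ tsub k g H' ⊤ := by
  intro H' hH'
  have hnd : B.Nondegenerate :=
    ⟨hnondeg, fun y hy => hnondeg y fun x => (hsymm y x).trans (hy x)⟩
  obtain ⟨f, hf_mem, hf_id, hf_gp⟩ := H'.exists_projection_mapsTo gp
  have hf' := LinearMap.BilinForm.isAdjointPairLeftAdjointOfNondegenerate B hnd f
  have hpp_adj := isAdjointPair_id_sub_of_isotropic (fun a ha b hb => (hgp b).1 hb a ha)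
    (fun a ha b hb => (hgm b).1 hb a ha) hcompl.codisjoint hpp hpm
  have hpp_mem : ∀ x, pp x ∈ gp := fun x => by
    obtain ⟨a, ha, b, hb, rfl⟩ :=
      Submodule.mem_sup.mp (hcompl.sup_eq_top ▸ (Submodule.mem_top : x ∈ ⊤))
    rwa [map_add, hpp a ha, hpm b hb, add_zero]
  rw [map_eq_add_add_of_isAdjointPair hnd.2 ht hpp_adj hf']
  refine add_mem (add_mem (Submodule.mem_sup_left (Submodule.mem_sup_left ?_))
    (Submodule.mem_sup_right ?_)) (Submodule.mem_sup_left (Submodule.mem_sup_right ?_))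
  · exact map_mem_tsub (fun x => hpp_mem (f x)) hpp_mem t
  · refine map_mem_tsub (fun x => ?_) (fun _ => Submodule.mem_top) t
    have hK := hf_gp _ (hpp_mem x)
    simpa [hpp _ hK] using hf_mem (pp x)
  · exact map_mem_tsub (fun _ => Submodule.mem_top)
      (id_sub_mem_of_isAdjointPair hsymm (fun x => (hH' x).2) hf_id hf') t
end

section
/- Let 𝔤₊ and 𝔥' be Lagrangian subspaces of 𝔤. Then the orthogonal complement of the subspace 𝔤₊ ⊗ 𝔤₊ + 𝔤 ⊗ 𝔥' + 𝔥' ⊗ 𝔤 of 𝔤 ⊗ 𝔤, taken with respect to the bilinear form ⟨,⟩ ⊗ ⟨,⟩, is equal to (𝔤₊ ∩ 𝔥') ⊗ 𝔥' + 𝔥' ⊗ (𝔤₊ ∩ 𝔥'). -/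
/-!
Over a nondegenerate form on a finite-dimensional space, the orthogonal of `U ⊗ V` is
`𝔤 ⊗ V^⊥ + U^⊥ ⊗ 𝔤`: it is the kernel of the tensor product of the two surjections
`𝔤 → U^*` and `𝔤 → V^*` induced by the form. With `𝔤₊^⊥ = 𝔤₊` and `𝔥'^⊥ = 𝔥'` the
left-hand side becomes `(𝔤 ⊗ 𝔤₊ + 𝔤₊ ⊗ 𝔤) ∩ (𝔤 ⊗ 𝔥') ∩ (𝔥' ⊗ 𝔤)`. In a basis of `𝔤`
adapted to both `𝔤₊` and `𝔥'`, every subspace in sight is spanned by the tensor products of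
basis vectors indexed by a set of pairs, so the intersection is computed on index sets.
-/
open TensorProduct

variable (k : Type*) [Field k]
variable (g : Type*) [AddCommGroup g] [Module k g]

open Submodule LinearMap Module

variable {k g}

theorem LinearIndepOn.id_union_of_inf_span_le {s t : Set g} (hs : LinearIndepOn k id s)
    (ht : LinearIndepOn k id t) (hst : span k s ⊓ span k t ≤ span k (s ∩ t)) :
    LinearIndepOn k id (s ∪ t) := by
  have hdisj : Disjoint (span k (t ∩ s)) (span k (t \ s)) :=
    ((linearIndepOn_id_union_iff Set.disjoint_sdiff_inter.symm).1
      (by rwa [Set.inter_union_sdiff])).2.2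
  rw [← Set.union_sdiff_self]
  refine hs.id_union (ht.mono Set.sdiff_subset) (Submodule.disjoint_def.2 fun x hxs hxt => ?_)
  have hx : x ∈ span k (t ∩ s) := by
    rw [Set.inter_comm]
    exact hst ⟨hxs, span_mono Set.sdiff_subset hxt⟩
  exact Submodule.disjoint_def.1 hdisj x hx hxt

theorem exists_basis_span_image_eq_and_span_image_eq (A H : Submodule k g) :
    ∃ (S : Set g) (b : Basis S k g) (sA sH : Set S),
      span k (b '' sA) = A ∧ span k (b '' sH) = H := by
  obtain ⟨sD, hsD, hsD_span, hsD_li⟩ := exists_linearIndependent k (↑(A ⊓ H) : Set g)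
  rw [span_eq] at hsD_span
  obtain ⟨sA, hsA, hDA, hA, hsA_li⟩ :=
    exists_linearIndepOn_id_extension hsD_li (fun x hx => (hsD hx).1)
  obtain ⟨sH, hsH, hDH, hH, hsH_li⟩ :=
    exists_linearIndepOn_id_extension hsD_li (fun x hx => (hsD hx).2)
  have hA_span : span k sA = A := le_antisymm (span_le.2 hsA) hA
  have hH_span : span k sH = H := le_antisymm (span_le.2 hsH) hH
  have hli : LinearIndepOn k id (sA ∪ sH) := hsA_li.id_union_of_inf_span_le hsH_li <| by
    rw [hA_span, hH_span, ← hsD_span]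
    exact span_mono (Set.subset_inter hDA hDH)
  have himage : ∀ s ⊆ sA ∪ sH, Basis.extend hli '' ((↑) ⁻¹' s) = s := fun s hs => by
    rw [Basis.coe_extend, Subtype.image_preimage_coe, Set.inter_eq_right]
    exact hs.trans (Basis.subset_extend hli)
  exact ⟨_, Basis.extend hli, _, _, by rw [himage sA Set.subset_union_left, hA_span],
    by rw [himage sH Set.subset_union_right, hH_span]⟩

theorem Module.Basis.span_image_inf_span_image {ι : Type*} (b : Basis ι k g) (s t : Set ι) :
    span k (b '' s) ⊓ span k (b '' t) = span k (b '' (s ∩ t)) := by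
  ext x
  simp only [mem_inf, Basis.mem_span_image, Set.subset_inter_iff]

theorem tsub_eq_map₂ (U V : Submodule k g) :
    tsub k g U V = map₂ (TensorProduct.mk k g g) U V := by
  rw [map₂_eq_span_image2, tsub]
  congr 1
  ext z
  simp [Set.image2, eq_comm]

theorem tsub_span_image {ι : Type*} (b : Basis ι k g) (s t : Set ι) :
    tsub k g (span k (b '' s)) (span k (b '' t)) = span k (b.tensorProduct b '' s ×ˢ t) := by
  rw [tsub_eq_map₂, map₂_span_span, Set.image2_image_left, Set.image2_image_right,
    ← Set.image_uncurry_prod]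
  congr 2
  funext ⟨i, j⟩
  simp

theorem range_lTensor_subtype (W : Submodule k g) :
    range (lTensor g W.subtype) = tsub k g ⊤ W := by
  rw [tsub_eq_map₂, lTensor, range_map, range_id, range_subtype]

theorem range_rTensor_subtype (W : Submodule k g) :
    range (rTensor g W.subtype) = tsub k g W ⊤ := by
  rw [tsub_eq_map₂, rTensor, range_map, range_id, range_subtype]

theorem tsub_bot_left (V : Submodule k g) : tsub k g ⊥ V = ⊥ := by
  rw [tsub_eq_map₂, map₂_bot_left]

theorem tsub_bot_right (U : Submodule k g) : tsub k g U ⊥ = ⊥ := by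
  rw [tsub_eq_map₂, map₂_bot_right]

theorem tsub_sup_inf_tsub_inf_tsub (P H : Submodule k g) :
    (tsub k g ⊤ P ⊔ tsub k g P ⊤) ⊓ tsub k g ⊤ H ⊓ tsub k g H ⊤ =
      tsub k g (P ⊓ H) H ⊔ tsub k g H (P ⊓ H) := by
  obtain ⟨S, b, sP, sH, hP, hH⟩ := exists_basis_span_image_eq_and_span_image_eq P H
  have htop : span k (b '' Set.univ) = ⊤ := by rw [Set.image_univ, b.span_eq]
  rw [← hP, ← hH, ← htop]
  simp only [Basis.span_image_inf_span_image, tsub_span_image, ← span_union, ← Set.image_union]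
  congr 2
  ext ⟨i, j⟩
  simp only [Set.mem_union, Set.mem_inter_iff, Set.mem_prod, Set.mem_univ, true_and, and_true]
  tauto

theorem LinearMap.BilinForm.mem_orthogonal_span_iff (T : LinearMap.BilinForm k g) (s : Set g)
    (z : g) :
    z ∈ T.orthogonal (span k s) ↔ ∀ w ∈ s, T w z = 0 :=
  span_le (p := ker (T.flip z))

theorem LinearMap.BilinForm.orthogonal_sup (T : LinearMap.BilinForm k g) (N N' : Submodule k g) :
    T.orthogonal (N ⊔ N') = T.orthogonal N ⊓ T.orthogonal N' := by
  ext z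
  exact sup_le_iff (c := ker (T.flip z))

theorem LinearMap.BilinForm.orthogonal_top_eq_bot_of_injective [FiniteDimensional k g]
    {B : LinearMap.BilinForm k g} (hB : Function.Injective B) : B.orthogonal ⊤ = ⊥ := by
  have hflip : Function.Injective B.flip := flip_injective_iff₁.2 <|
    (injective_iff_surjective_of_finrank_eq_finrank Subspace.dual_finrank_eq.symm).1 hB
  refine eq_bot_iff.2 fun x hx => (mem_bot k).2 (hflip ?_)
  ext n
  simpa using hx n trivial

theorem IsLagrangian.orthogonal_eq {B : LinearMap.BilinForm k g} {W : Submodule k g}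
    (hW : IsLagrangian k g B W) : B.orthogonal W = W := by
  ext x
  exact (hW x).symm

theorem LinearMap.BilinForm.orthogonal_tsub [FiniteDimensional k g] (B : LinearMap.BilinForm k g)
    (hB : Function.Injective B) (U V : Submodule k g) :
    BilinForm.orthogonal (BilinForm.tmul B B) (tsub k g U V) =
      tsub k g ⊤ (B.orthogonal V) ⊔ tsub k g (B.orthogonal U) ⊤ := by
  let π : ∀ W : Submodule k g, g →ₗ[k] Dual k W := fun W => W.subtype.dualMap ∘ₗ B.flip
  have hπ_surj : ∀ W : Submodule k g, Function.Surjective (π W) := fun W =>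
    (dualMap_surjective_of_injective W.injective_subtype).comp (flip_surjective_iff₁.2 hB)
  have hπ_ker : ∀ W : Submodule k g, ker (π W) = B.orthogonal W := fun W => by
    ext x
    simp [π, mem_orthogonal_iff, DFunLike.ext_iff]
  have hπ_pairing : ∀ z (u : U) (v : V),
      dualDistrib k U V (map (π U) (π V) z) (u ⊗ₜ v) = BilinForm.tmul B B (u.1 ⊗ₜ v.1) z := by
    intro z u v
    induction z using TensorProduct.induction_on with
    | zero => simp
    | tmul x y => simp [π, BilinForm.tmul, BilinForm.tensorDistrib_tmul, mul_comm]
    | add z₁ z₂ h₁ h₂ => simp only [map_add, LinearMap.add_apply, h₁, h₂]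
  rw [← hπ_ker, ← hπ_ker, ← range_lTensor_subtype, ← range_rTensor_subtype,
    ← TensorProduct.map_ker (exact_subtype_ker_map _) (hπ_surj U) (exact_subtype_ker_map _)
      (hπ_surj V)]
  ext z
  unfold tsub
  rw [BilinForm.mem_orthogonal_span_iff, mem_ker, ← (dualDistribEquiv k U V).injective.eq_iff,
    map_zero]
  constructor
  · intro h
    refine TensorProduct.ext' fun u v => (hπ_pairing z u v).trans ?_
    exact h _ ⟨u, u.2, v, v.2, rfl⟩
  · rintro h _ ⟨u, hu, v, hv, rfl⟩
    rw [← hπ_pairing z ⟨u, hu⟩ ⟨v, hv⟩]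
    exact LinearMap.congr_fun h _

theorem stmt3_general [FiniteDimensional k g] (B : g →ₗ[k] g →ₗ[k] k)
    (hnondeg : ∀ x : g, (∀ y : g, B x y = 0) → x = 0)
    -- `𝔤₊` and `𝔥'` Lagrangian subspaces
    (gp H' : Submodule k g) (hgp : IsLagrangian k g B gp) (hH' : IsLagrangian k g B H') :
    -- the orthogonal complement of `𝔤₊ ⊗ 𝔤₊ + 𝔤 ⊗ 𝔥' + 𝔥' ⊗ 𝔤` w.r.t. `⟨,⟩ ⊗ ⟨,⟩`
    -- equals `(𝔤₊ ∩ 𝔥') ⊗ 𝔥' + 𝔥' ⊗ (𝔤₊ ∩ 𝔥')`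
    {z : g ⊗[k] g |
        ∀ w ∈ (tsub k g gp gp ⊔ tsub k g ⊤ H' ⊔ tsub k g H' ⊤ : Submodule k (g ⊗[k] g)),
          LinearMap.BilinForm.tmul B B w z = 0} =
      ((tsub k g (gp ⊓ H') H' ⊔ tsub k g H' (gp ⊓ H') : Submodule k (g ⊗[k] g)) :
        Set (g ⊗[k] g)) := by
  have hB : Function.Injective B := fun x y hxy =>
    sub_eq_zero.1 (hnondeg _ fun z => by rw [map_sub, hxy, sub_self, LinearMap.zero_apply])
  change (BilinForm.orthogonal (BilinForm.tmul B B)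
    (tsub k g gp gp ⊔ tsub k g ⊤ H' ⊔ tsub k g H' ⊤) : Set (g ⊗[k] g)) = _
  rw [BilinForm.orthogonal_sup, BilinForm.orthogonal_sup, BilinForm.orthogonal_tsub B hB,
    BilinForm.orthogonal_tsub B hB, BilinForm.orthogonal_tsub B hB, hgp.orthogonal_eq,
    hH'.orthogonal_eq, BilinForm.orthogonal_top_eq_bot_of_injective hB,
    tsub_bot_left, tsub_bot_right, sup_bot_eq, bot_sup_eq, tsub_sup_inf_tsub_inf_tsub]

theorem stmt3 [FiniteDimensional k g] (B : g →ₗ[k] g →ₗ[k] k)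
    (hsymm : ∀ x y : g, B x y = B y x)
    (hnondeg : ∀ x : g, (∀ y : g, B x y = 0) → x = 0)
    -- `𝔤₊` and `𝔥'` Lagrangian subspaces
    (gp H' : Submodule k g) (hgp : IsLagrangian k g B gp) (hH' : IsLagrangian k g B H') :
    -- the orthogonal complement of `𝔤₊ ⊗ 𝔤₊ + 𝔤 ⊗ 𝔥' + 𝔥' ⊗ 𝔤` w.r.t. `⟨,⟩ ⊗ ⟨,⟩`
    -- equals `(𝔤₊ ∩ 𝔥') ⊗ 𝔥' + 𝔥' ⊗ (𝔤₊ ∩ 𝔥')`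
    {z : g ⊗[k] g |
        ∀ w ∈ (tsub k g gp gp ⊔ tsub k g ⊤ H' ⊔ tsub k g H' ⊤ : Submodule k (g ⊗[k] g)),
          LinearMap.BilinForm.tmul B B w z = 0} =
      ((tsub k g (gp ⊓ H') H' ⊔ tsub k g H' (gp ⊓ H') : Submodule k (g ⊗[k] g)) :
        Set (g ⊗[k] g)) :=
  stmt3_general B hnondeg gp H' hgp hH'
end

section
/- Under the standing assumptions on (A, B, F): (a) for all ℓ, ℓ' ∈ (A*)^B the product ℓ * ℓ' again lies in (A*)^B; (b) the product * is associative on (A*)^B; (c) the counit ε belongs to (A*)^B and is a two-sided unit for *, i.e., ε * ℓ = ℓ * ε = ℓ for all ℓ ∈ (A*)^B. Hence ((A*)^B, *, ε) is an associative unital k-algebra. -/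
/-! An invariant form `ℓ` satisfies `ℓ(x b) = ℓ(x) ε(b)` for `b ∈ B`, so `ℓ ⊗ ℓ'` and
`ℓ ⊗ ℓ' ⊗ ℓ''` are semi-invariant, with the counit as multiplier, under right multiplication by
`B ⊗̄ B` and `B ⊗̄ B ⊗̄ B`. Closure: `Δ(ab)F⁻¹ = (Δ(a)F⁻¹)(FΔ(b)F⁻¹)`, and the second factor lies
in `B ⊗̄ B` with counit `ε(b)`. Associativity: by coassociativity the two iterated products
evaluate `ℓ ⊗ ℓ' ⊗ ℓ''` at `X` and at `X Φ_B` for `X = (Δ ⊗ id)(Δ(a)F⁻¹)(F⁻¹ ⊗ 1)`, and the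
counit of `Φ_B` is `1`. Unit: `ε ⊗ id` and `id ⊗ ε` are algebra maps sending `Δ(a)` to `a` and,
by the normalisation of `F`, `F⁻¹` to `1`. -/

open TensorProduct

variable (k A : Type*) [CommRing k] [Ring A] [Bialgebra k A]

/-- The submodule `X ⊗̄ Y` of `A ⊗ A` spanned by elementary tensors from `X` and `Y`. -/
def tens2 (X Y : Set A) : Submodule k (A ⊗[k] A) :=
  Submodule.span k {z | ∃ x ∈ X, ∃ y ∈ Y, z = x ⊗ₜ[k] y}

/-- The submodule `X ⊗̄ Y ⊗̄ Z` of `(A ⊗ A) ⊗ A`. -/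
def tens3 (X Y Z : Set A) : Submodule k ((A ⊗[k] A) ⊗[k] A) :=
  Submodule.span k {w | ∃ x ∈ X, ∃ y ∈ Y, ∃ z ∈ Z, w = (x ⊗ₜ[k] y) ⊗ₜ[k] z}

/-- `ℓ ⊗ ℓ'` as a linear form on `A ⊗ A` (composite `A ⊗ A → k ⊗ k ≅ k`). -/
noncomputable def pairForm (ℓ ℓ' : A →ₗ[k] k) : A ⊗[k] A →ₗ[k] k :=
  (TensorProduct.lid k k).toLinearMap ∘ₗ TensorProduct.map ℓ ℓ'

/-- The twisted product `(ℓ * ℓ')(a) = (ℓ ⊗ ℓ')(Δ(a)·F⁻¹)`, where `Finv = F⁻¹`. -/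
noncomputable def starProd (Finv : A ⊗[k] A) (ℓ ℓ' : A →ₗ[k] k) : A →ₗ[k] k :=
  pairForm k A ℓ ℓ' ∘ₗ LinearMap.mulRight k Finv ∘ₗ Coalgebra.comul

/-- `(A*)^B`: the right `B`-invariant linear forms on `A`. -/
def invForms (S : Set A) : Set (A →ₗ[k] k) :=
  {ℓ | ∀ a : A, ∀ b ∈ S, ℓ (a * b) = ℓ a * Coalgebra.counit (R := k) b}

/-- `Δ ⊗ id` as a map `A ⊗ A → (A ⊗ A) ⊗ A`. -/
noncomputable def DeltaId : A ⊗[k] A →ₗ[k] (A ⊗[k] A) ⊗[k] A :=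
  TensorProduct.map Coalgebra.comul LinearMap.id

/-- `id ⊗ Δ` as a map `A ⊗ A → (A ⊗ A) ⊗ A` (reassociated). -/
noncomputable def IdDelta : A ⊗[k] A →ₗ[k] (A ⊗[k] A) ⊗[k] A :=
  (TensorProduct.assoc k A A A).symm.toLinearMap ∘ₗ
    TensorProduct.map LinearMap.id Coalgebra.comul

/-- `1 ⊗ x` as an element of `(A ⊗ A) ⊗ A`, for `x : A ⊗ A`. -/
noncomputable def oneTens (x : A ⊗[k] A) : (A ⊗[k] A) ⊗[k] A :=
  (TensorProduct.assoc k A A A).symm ((1 : A) ⊗ₜ[k] x)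

/-- `Φ_B = (F⊗1)·((Δ⊗id)F)·((1⊗F)·((id⊗Δ)F))⁻¹`, written using `F⁻¹ = Finv`. -/
noncomputable def PhiB (F Finv : A ⊗[k] A) : (A ⊗[k] A) ⊗[k] A :=
  (F ⊗ₜ[k] (1 : A)) * DeltaId k A F * IdDelta k A Finv * oneTens k A Finv

section TensorForm

variable {k} {M N P : Type*} [AddCommMonoid M] [Module k M] [AddCommMonoid N] [Module k N]
  [AddCommMonoid P] [Module k P]

noncomputable def tensorForm (f : M →ₗ[k] k) (g : N →ₗ[k] k) : M ⊗[k] N →ₗ[k] k :=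
  (TensorProduct.lid k k).toLinearMap ∘ₗ TensorProduct.map f g

@[simp]
lemma tensorForm_tmul (f : M →ₗ[k] k) (g : N →ₗ[k] k) (x : M) (y : N) :
    tensorForm f g (x ⊗ₜ[k] y) = f x * g y := by
  simp [tensorForm]

lemma tensorForm_assoc_symm (f : M →ₗ[k] k) (g : N →ₗ[k] k) (h : P →ₗ[k] k)
    (w : M ⊗[k] (N ⊗[k] P)) :
    tensorForm (tensorForm f g) h ((TensorProduct.assoc k M N P).symm w) =
      tensorForm f (tensorForm g h) w := by
  have hcomp : tensorForm (tensorForm f g) h ∘ₗ (TensorProduct.assoc k M N P).symm.toLinearMap =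
      tensorForm f (tensorForm g h) :=
    TensorProduct.ext_threefold' fun x y z => by simp [mul_assoc]
  exact LinearMap.congr_fun hcomp w

lemma tensorForm_counit_counit [Coalgebra k M] [Coalgebra k N] :
    tensorForm (Coalgebra.counit : M →ₗ[k] k) (Coalgebra.counit : N →ₗ[k] k) =
      Coalgebra.counit :=
  TensorProduct.ext' fun x y => by simp [mul_comm]

end TensorForm

section SemiInvariance

variable {k} {C D : Type*} [Semiring C] [Algebra k C] [Semiring D] [Algebra k D]

def IsSemiInvariantOn (φ χ : C →ₗ[k] k) (S : Set C) : Prop :=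
  ∀ x, ∀ s ∈ S, φ (x * s) = φ x * χ s

namespace IsSemiInvariantOn

variable {φ χ : C →ₗ[k] k} {S T : Set C}

lemma mono (h : IsSemiInvariantOn φ χ S) (hTS : T ⊆ S) : IsSemiInvariantOn φ χ T :=
  fun x s hs => h x s (hTS hs)

lemma span (h : IsSemiInvariantOn φ χ S) : IsSemiInvariantOn φ χ (Submodule.span k S) := by
  intro x s hs
  induction hs using Submodule.span_induction with
  | mem s hs => exact h x s hs
  | zero => simp
  | add s t _ _ hs ht => rw [mul_add, map_add, map_add, hs, ht, mul_add]
  | smul c s _ hs =>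
    rw [mul_smul_comm, map_smul, map_smul, hs, smul_eq_mul, smul_eq_mul, mul_left_comm]

lemma tensor {ψ ω : D →ₗ[k] k} {T : Set D} (hφ : IsSemiInvariantOn φ χ S)
    (hψ : IsSemiInvariantOn ψ ω T) :
    IsSemiInvariantOn (tensorForm φ ψ) (tensorForm χ ω)
      {z | ∃ x ∈ S, ∃ y ∈ T, z = x ⊗ₜ[k] y} := by
  rintro u _ ⟨s, hs, t, ht, rfl⟩
  induction u using TensorProduct.induction_on with
  | zero => simp
  | tmul x y =>
    rw [Algebra.TensorProduct.tmul_mul_tmul, tensorForm_tmul, tensorForm_tmul, tensorForm_tmul,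
      hφ x s hs, hψ y t ht]
    ring
  | add u v hu hv => rw [add_mul, map_add, map_add, hu, hv, add_mul]

end IsSemiInvariantOn

end SemiInvariance

section InvariantForms

variable {k A}

lemma pairForm_eq_tensorForm (ℓ ℓ' : A →ₗ[k] k) : pairForm k A ℓ ℓ' = tensorForm ℓ ℓ' := rfl

lemma isSemiInvariantOn_tens2 {X Y : Set A} {ℓ ℓ' : A →ₗ[k] k}
    (hℓ : ℓ ∈ invForms k A X) (hℓ' : ℓ' ∈ invForms k A Y) :
    IsSemiInvariantOn (pairForm k A ℓ ℓ') Coalgebra.counit (tens2 k A X Y) := by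
  have h := (IsSemiInvariantOn.tensor hℓ hℓ').span
  rwa [tensorForm_counit_counit] at h

lemma isSemiInvariantOn_tens3 {X Y Z : Set A} {ℓ ℓ' ℓ'' : A →ₗ[k] k}
    (hℓ : ℓ ∈ invForms k A X) (hℓ' : ℓ' ∈ invForms k A Y) (hℓ'' : ℓ'' ∈ invForms k A Z) :
    IsSemiInvariantOn (tensorForm (pairForm k A ℓ ℓ') ℓ'') Coalgebra.counit
      (tens3 k A X Y Z) := by
  have h := ((isSemiInvariantOn_tens2 hℓ hℓ').tensor hℓ'').span
  rw [tensorForm_counit_counit] at h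
  refine h.mono (Submodule.span_mono ?_)
  rintro _ ⟨x, hx, y, hy, z, hz, rfl⟩
  exact ⟨x ⊗ₜ[k] y, Submodule.subset_span ⟨x, hx, y, hy, rfl⟩, z, hz, rfl⟩

lemma counit_mem_invForms (S : Set A) : Coalgebra.counit ∈ invForms k A S :=
  fun a b _ => Bialgebra.counit_mul a b

end InvariantForms

noncomputable def counitTensorId : A ⊗[k] A →ₐ[k] A :=
  (Algebra.TensorProduct.lid k A).toAlgHom.comp
    (Algebra.TensorProduct.map (Bialgebra.counitAlgHom k A) (AlgHom.id k A))

noncomputable def idTensorCounit : A ⊗[k] A →ₐ[k] A :=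
  (Algebra.TensorProduct.rid k k A).toAlgHom.comp
    (Algebra.TensorProduct.map (AlgHom.id k A) (Bialgebra.counitAlgHom k A))

section CounitMaps

variable {k A}

lemma counitTensorId_toLinearMap : (counitTensorId k A).toLinearMap =
    (TensorProduct.lid k A).toLinearMap ∘ₗ (Coalgebra.counit : A →ₗ[k] k).rTensor A :=
  TensorProduct.ext' fun x y => by simp [counitTensorId]

lemma idTensorCounit_toLinearMap : (idTensorCounit k A).toLinearMap =
    (TensorProduct.rid k A).toLinearMap ∘ₗ (Coalgebra.counit : A →ₗ[k] k).lTensor A :=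
  TensorProduct.ext' fun x y => by simp [idTensorCounit]

lemma counitTensorId_comul (a : A) : counitTensorId k A (Coalgebra.comul a) = a := by
  rw [← AlgHom.toLinearMap_apply, counitTensorId_toLinearMap, LinearMap.comp_apply,
    Coalgebra.rTensor_counit_comul]
  simp

lemma idTensorCounit_comul (a : A) : idTensorCounit k A (Coalgebra.comul a) = a := by
  rw [← AlgHom.toLinearMap_apply, idTensorCounit_toLinearMap, LinearMap.comp_apply,
    Coalgebra.lTensor_counit_comul]
  simp

lemma pairForm_counit_left (ℓ : A →ₗ[k] k) :
    pairForm k A Coalgebra.counit ℓ = ℓ ∘ₗ (counitTensorId k A).toLinearMap :=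
  TensorProduct.ext' fun x y => by simp [pairForm_eq_tensorForm, counitTensorId]

lemma pairForm_counit_right (ℓ : A →ₗ[k] k) :
    pairForm k A ℓ Coalgebra.counit = ℓ ∘ₗ (idTensorCounit k A).toLinearMap :=
  TensorProduct.ext' fun x y => by simp [pairForm_eq_tensorForm, idTensorCounit, mul_comm]

lemma counit_comul_eq_counit (a : A) :
    Coalgebra.counit (R := k) (Coalgebra.comul (R := k) a) = Coalgebra.counit (R := k) a := by
  rw [← tensorForm_counit_counit, ← pairForm_eq_tensorForm, pairForm_counit_left,
    LinearMap.comp_apply, AlgHom.toLinearMap_apply, counitTensorId_comul]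

end CounitMaps

section StarProduct

variable {k A} {F Finv : A ⊗[k] A}

lemma starProd_apply (ℓ ℓ' : A →ₗ[k] k) (a : A) :
    starProd k A Finv ℓ ℓ' a = pairForm k A ℓ ℓ' (Coalgebra.comul a * Finv) := rfl

lemma counit_mul_counit_eq_one (hinv : Finv * F = 1) :
    Coalgebra.counit (R := k) Finv * Coalgebra.counit (R := k) F = 1 := by
  rw [← Bialgebra.counit_mul, hinv, Bialgebra.counit_one]

theorem starProd_mem_invForms {X Y S : Set A} (hinv : Finv * F = 1)
    (hFS : ∀ b ∈ S, F * Coalgebra.comul (R := k) b * Finv ∈ tens2 k A X Y)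
    {ℓ ℓ' : A →ₗ[k] k} (hℓ : ℓ ∈ invForms k A X) (hℓ' : ℓ' ∈ invForms k A Y) :
    starProd k A Finv ℓ ℓ' ∈ invForms k A S := by
  intro a b hb
  have hsplit : Coalgebra.comul (a * b) * Finv =
      (Coalgebra.comul a * Finv) * (F * Coalgebra.comul (R := k) b * Finv) := by
    rw [Bialgebra.comul_mul]
    simp only [mul_assoc]
    rw [← mul_assoc Finv F, hinv, one_mul]
  have hcounit : Coalgebra.counit (F * Coalgebra.comul (R := k) b * Finv) =
      Coalgebra.counit (R := k) b := by
    rw [Bialgebra.counit_mul, Bialgebra.counit_mul, counit_comul_eq_counit]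
    linear_combination Coalgebra.counit (R := k) b * counit_mul_counit_eq_one hinv
  rw [starProd_apply, starProd_apply, hsplit,
    isSemiInvariantOn_tens2 hℓ hℓ' _ _ (hFS b hb), hcounit]

theorem counit_starProd (hinv : Finv * F = 1)
    (hF : TensorProduct.lid k A (TensorProduct.map Coalgebra.counit LinearMap.id F) = 1)
    (ℓ : A →ₗ[k] k) : starProd k A Finv Coalgebra.counit ℓ = ℓ := by
  have hF' : counitTensorId k A F = 1 := hF
  have hFinv : counitTensorId k A Finv = 1 := by
    simpa [hF'] using congrArg (counitTensorId k A) hinv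
  ext a
  simp [starProd_apply, pairForm_counit_left, counitTensorId_comul, hFinv]

theorem starProd_counit (hinv : Finv * F = 1)
    (hF : TensorProduct.rid k A (TensorProduct.map LinearMap.id Coalgebra.counit F) = 1)
    (ℓ : A →ₗ[k] k) : starProd k A Finv ℓ Coalgebra.counit = ℓ := by
  have hF' : idTensorCounit k A F = 1 := hF
  have hFinv : idTensorCounit k A Finv = 1 := by
    simpa [hF'] using congrArg (idTensorCounit k A) hinv
  ext a
  simp [starProd_apply, pairForm_counit_right, idTensorCounit_comul, hFinv]

end StarProduct

section Associativity

variable {k A} {F Finv : A ⊗[k] A}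

lemma DeltaId_tmul (x y : A) :
    DeltaId k A (x ⊗ₜ[k] y) = Coalgebra.comul (R := k) x ⊗ₜ[k] y := rfl

lemma IdDelta_tmul (x y : A) :
    IdDelta k A (x ⊗ₜ[k] y) =
      (TensorProduct.assoc k A A A).symm (x ⊗ₜ[k] Coalgebra.comul (R := k) y) := rfl

lemma DeltaId_one : DeltaId k A 1 = 1 :=
  map_one (Algebra.TensorProduct.map (Bialgebra.comulAlgHom k A) (AlgHom.id k A))

lemma DeltaId_mul (x y : A ⊗[k] A) :
    DeltaId k A (x * y) = DeltaId k A x * DeltaId k A y :=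
  map_mul (Algebra.TensorProduct.map (Bialgebra.comulAlgHom k A) (AlgHom.id k A)) x y

lemma assoc_symm_mul (x y : A ⊗[k] (A ⊗[k] A)) :
    (TensorProduct.assoc k A A A).symm (x * y) =
      (TensorProduct.assoc k A A A).symm x * (TensorProduct.assoc k A A A).symm y :=
  map_mul (Algebra.TensorProduct.assoc k k k A A A).symm x y

lemma IdDelta_mul (x y : A ⊗[k] A) :
    IdDelta k A (x * y) = IdDelta k A x * IdDelta k A y := by
  have h : TensorProduct.map LinearMap.id Coalgebra.comul (x * y) =
      TensorProduct.map LinearMap.id Coalgebra.comul x *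
        TensorProduct.map (R := k) LinearMap.id Coalgebra.comul y :=
    map_mul (Algebra.TensorProduct.map (AlgHom.id k A) (Bialgebra.comulAlgHom k A)) x y
  simp only [IdDelta, LinearMap.comp_apply, LinearEquiv.coe_coe, h, assoc_symm_mul]

lemma DeltaId_comul (a : A) :
    DeltaId k A (Coalgebra.comul a) = IdDelta k A (Coalgebra.comul a) :=
  (Coalgebra.coassoc_symm_apply a).symm

lemma counit_DeltaId (x : A ⊗[k] A) :
    Coalgebra.counit (R := k) (DeltaId k A x) = Coalgebra.counit x := by
  induction x using TensorProduct.induction_on with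
  | zero => simp
  | tmul x y => simp [DeltaId_tmul, counit_comul_eq_counit]
  | add x y hx hy => rw [map_add, map_add, hx, hy, map_add]

lemma counit_assoc_symm (w : A ⊗[k] (A ⊗[k] A)) :
    Coalgebra.counit (R := k) ((TensorProduct.assoc k A A A).symm w) = Coalgebra.counit w :=
  CoalgHomClass.counit_comp_apply (Coalgebra.TensorProduct.assoc k k A A A).symm w

lemma counit_IdDelta (x : A ⊗[k] A) :
    Coalgebra.counit (R := k) (IdDelta k A x) = Coalgebra.counit x := by
  induction x using TensorProduct.induction_on with
  | zero => simp
  | tmul x y => simp [IdDelta_tmul, counit_assoc_symm, counit_comul_eq_counit]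
  | add x y hx hy => rw [map_add, map_add, hx, hy, map_add]

lemma counit_oneTens (x : A ⊗[k] A) :
    Coalgebra.counit (R := k) (oneTens k A x) = Coalgebra.counit x := by
  simp [oneTens, counit_assoc_symm]

lemma counit_PhiB (hinv : Finv * F = 1) :
    Coalgebra.counit (R := k) (PhiB k A F Finv) = 1 := by
  have h := counit_mul_counit_eq_one hinv
  simp only [PhiB, Bialgebra.counit_mul, counit_DeltaId, counit_IdDelta, counit_oneTens,
    TensorProduct.counit_tmul, Bialgebra.counit_one, one_smul]
  linear_combination (Coalgebra.counit (R := k) Finv * Coalgebra.counit F + 1) * h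

lemma DeltaId_mul_PhiB (hinv : Finv * F = 1) (a : A) :
    DeltaId k A (Coalgebra.comul a * Finv) * (Finv ⊗ₜ[k] (1 : A)) * PhiB k A F Finv =
      IdDelta k A (Coalgebra.comul a * Finv) * oneTens k A Finv := by
  have hleft : (Finv ⊗ₜ[k] (1 : A)) * (F ⊗ₜ[k] (1 : A)) = 1 := by
    rw [Algebra.TensorProduct.tmul_mul_tmul, hinv, one_mul]
    rfl
  have hDelta : DeltaId k A Finv * DeltaId k A F = 1 := by
    rw [← DeltaId_mul, hinv, DeltaId_one]
  rw [DeltaId_mul, IdDelta_mul, DeltaId_comul, PhiB]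
  simp only [mul_assoc]
  rw [← mul_assoc (Finv ⊗ₜ[k] (1 : A)), hleft, one_mul, ← mul_assoc (DeltaId k A Finv), hDelta,
    one_mul]

lemma pairForm_starProd_left (ℓ ℓ' ℓ'' : A →ₗ[k] k) (u : A ⊗[k] A) :
    pairForm k A (starProd k A Finv ℓ ℓ') ℓ'' u =
      tensorForm (pairForm k A ℓ ℓ') ℓ'' (DeltaId k A u * (Finv ⊗ₜ[k] (1 : A))) := by
  induction u using TensorProduct.induction_on with
  | zero => simp
  | tmul x y =>
    rw [DeltaId_tmul, Algebra.TensorProduct.tmul_mul_tmul, mul_one, tensorForm_tmul,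
      pairForm_eq_tensorForm, tensorForm_tmul, starProd_apply]
  | add x y hx hy => rw [map_add, hx, hy, map_add, add_mul, map_add]

lemma pairForm_starProd_right (ℓ ℓ' ℓ'' : A →ₗ[k] k) (u : A ⊗[k] A) :
    pairForm k A ℓ (starProd k A Finv ℓ' ℓ'') u =
      tensorForm (pairForm k A ℓ ℓ') ℓ'' (IdDelta k A u * oneTens k A Finv) := by
  induction u using TensorProduct.induction_on with
  | zero => simp
  | tmul x y =>
    simp only [pairForm_eq_tensorForm]
    rw [IdDelta_tmul, oneTens, ← assoc_symm_mul, Algebra.TensorProduct.tmul_mul_tmul, mul_one,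
      tensorForm_assoc_symm, tensorForm_tmul, tensorForm_tmul, starProd_apply,
      pairForm_eq_tensorForm]
  | add x y hx hy => rw [map_add, hx, hy, map_add, add_mul, map_add]

theorem starProd_assoc {X Y Z : Set A} (hinv : Finv * F = 1)
    (hPhi : PhiB k A F Finv ∈ tens3 k A X Y Z) {ℓ ℓ' ℓ'' : A →ₗ[k] k}
    (hℓ : ℓ ∈ invForms k A X) (hℓ' : ℓ' ∈ invForms k A Y) (hℓ'' : ℓ'' ∈ invForms k A Z) :
    starProd k A Finv (starProd k A Finv ℓ ℓ') ℓ'' =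
      starProd k A Finv ℓ (starProd k A Finv ℓ' ℓ'') := by
  ext a
  set T := tensorForm (pairForm k A ℓ ℓ') ℓ''
  set u := Coalgebra.comul (R := k) a * Finv
  calc starProd k A Finv (starProd k A Finv ℓ ℓ') ℓ'' a
      = T (DeltaId k A u * (Finv ⊗ₜ[k] (1 : A))) := pairForm_starProd_left ℓ ℓ' ℓ'' u
    _ = T (DeltaId k A u * (Finv ⊗ₜ[k] (1 : A)) * PhiB k A F Finv) := by
      rw [isSemiInvariantOn_tens3 hℓ hℓ' hℓ'' _ _ hPhi, counit_PhiB hinv, mul_one]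
    _ = T (IdDelta k A u * oneTens k A Finv) := by rw [DeltaId_mul_PhiB hinv]
    _ = starProd k A Finv ℓ (starProd k A Finv ℓ' ℓ'') a :=
      (pairForm_starProd_right ℓ ℓ' ℓ'' u).symm

end Associativity

theorem stmt7 (B : Subalgebra k A) (F Finv : A ⊗[k] A)
    (hinv2 : Finv * F = 1)
    (hcF1 : TensorProduct.lid k A (TensorProduct.map Coalgebra.counit LinearMap.id F) = 1)
    (hcF2 : TensorProduct.rid k A (TensorProduct.map LinearMap.id Coalgebra.counit F) = 1)
    (hFB : ∀ b ∈ B, F * Coalgebra.comul (R := k) b * Finv ∈ tens2 k A (B : Set A) (B : Set A))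
    (hPhi : PhiB k A F Finv ∈ tens3 k A (B : Set A) (B : Set A) (B : Set A)) :
    (∀ ℓ ∈ invForms k A (B : Set A), ∀ ℓ' ∈ invForms k A (B : Set A),
        starProd k A Finv ℓ ℓ' ∈ invForms k A (B : Set A)) ∧
    (∀ ℓ ∈ invForms k A (B : Set A), ∀ ℓ' ∈ invForms k A (B : Set A),
        ∀ ℓ'' ∈ invForms k A (B : Set A),
        starProd k A Finv (starProd k A Finv ℓ ℓ') ℓ'' =
          starProd k A Finv ℓ (starProd k A Finv ℓ' ℓ'')) ∧
    ((Coalgebra.counit : A →ₗ[k] k) ∈ invForms k A (B : Set A) ∧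
      ∀ ℓ ∈ invForms k A (B : Set A),
        starProd k A Finv (Coalgebra.counit : A →ₗ[k] k) ℓ = ℓ ∧
          starProd k A Finv ℓ (Coalgebra.counit : A →ₗ[k] k) = ℓ) :=
  ⟨fun _ hℓ _ hℓ' => starProd_mem_invForms hinv2 hFB hℓ hℓ',
    fun _ hℓ _ hℓ' _ hℓ'' => starProd_assoc hinv2 hPhi hℓ hℓ' hℓ'',
    counit_mem_invForms _,
    fun ℓ _ => ⟨counit_starProd hinv2 hcF1 ℓ, starProd_counit hinv2 hcF2 ℓ⟩⟩
end

section
/- Under the standing assumptions on (A, B, F), for a ∈ A and ℓ ∈ Hom_k(A,k) define a • ℓ ∈ Hom_k(A,k) by (a • ℓ)(a') = ℓ(a·a'). Then: (a) if ℓ ∈ (A*)^B then a • ℓ ∈ (A*)^B; (b) a • (b • ℓ) = (b·a) • ℓ for all a, b ∈ A, so • makes (A*)^B a module over the opposite algebra A^op; (c) for all a ∈ A and ℓ, ℓ' ∈ (A*)^B, writing Δ(a) = Σᵢ aᵢ⁽¹⁾ ⊗ aᵢ⁽²⁾ (any finite-sum representation), one has a • (ℓ * ℓ') = Σᵢ (aᵢ⁽¹⁾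 • ℓ) * (aᵢ⁽²⁾ • ℓ'). Thus ((A*)^B, *) is an algebra-module over (A^op, Δ). -/
open TensorProduct

variable (k A : Type*) [CommRing k] [Ring A] [Bialgebra k A]

/-- The action `(a • ℓ)(a') = ℓ(a·a')`, making `Hom_k(A,k)` a module over `A^op`. -/
noncomputable def act (a : A) (ℓ : A →ₗ[k] k) : A →ₗ[k] k :=
  ℓ ∘ₗ LinearMap.mulLeft k a

/-! Everything comes from associativity in `A` and multiplicativity of `Δ`:
`Δ(a a') F⁻¹ = Δ(a) · (Δ(a') F⁻¹)`, and left multiplication by `a₁ ⊗ a₂` is dual to letting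
`a₁` and `a₂` act on the two tensor factors. -/

theorem act_mem_invForms {S : Set A} (a : A) {ℓ : A →ₗ[k] k} (hℓ : ℓ ∈ invForms k A S) :
    act k A a ℓ ∈ invForms k A S := fun a' b hb => by
  simpa [act, mul_assoc] using hℓ (a * a') b hb

theorem act_act (a b : A) (ℓ : A →ₗ[k] k) : act k A a (act k A b ℓ) = act k A (b * a) ℓ := by
  ext x
  simp [act]

theorem pairForm_act_act (p q : A) (ℓ ℓ' : A →ₗ[k] k) :
    pairForm k A (act k A p ℓ) (act k A q ℓ') =
      pairForm k A ℓ ℓ' ∘ₗ LinearMap.mulLeft k (p ⊗ₜ[k] q) := by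
  ext u v
  simp [pairForm, act, Algebra.TensorProduct.tmul_mul_tmul]

theorem act_starProd (Finv : A ⊗[k] A) (ℓ ℓ' : A →ₗ[k] k) {a : A} {ι : Type*} (s : Finset ι)
    (a1 a2 : ι → A) (hΔ : Coalgebra.comul (R := k) a = ∑ i ∈ s, a1 i ⊗ₜ[k] a2 i) :
    act k A a (starProd k A Finv ℓ ℓ') =
      ∑ i ∈ s, starProd k A Finv (act k A (a1 i) ℓ) (act k A (a2 i) ℓ') := by
  ext x
  simp only [starProd, pairForm_act_act, LinearMap.coe_sum, Finset.sum_apply,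
    LinearMap.comp_apply, LinearMap.mulLeft_apply, LinearMap.mulRight_apply]
  simp only [act, LinearMap.comp_apply, LinearMap.mulLeft_apply, LinearMap.mulRight_apply]
  rw [Bialgebra.comul_mul, hΔ, mul_assoc, ← map_sum, ← Finset.sum_mul]

theorem stmt8 (B : Subalgebra k A) (Finv : A ⊗[k] A) :
    -- (a) the action preserves `(A*)^B`
    (∀ a : A, ∀ ℓ ∈ invForms k A (B : Set A), act k A a ℓ ∈ invForms k A (B : Set A)) ∧
    -- (b) `a • (b • ℓ) = (b·a) • ℓ`: a right action, i.e. a module over `A^op`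
    (∀ a b : A, ∀ ℓ : A →ₗ[k] k, act k A a (act k A b ℓ) = act k A (b * a) ℓ) ∧
    -- (c) module-algebra compatibility: `a • (ℓ * ℓ') = Σᵢ (aᵢ⁽¹⁾ • ℓ) * (aᵢ⁽²⁾ • ℓ')`
    (∀ a : A, ∀ ℓ ∈ invForms k A (B : Set A), ∀ ℓ' ∈ invForms k A (B : Set A),
      ∀ (ι : Type) (s : Finset ι) (a1 a2 : ι → A),
        Coalgebra.comul (R := k) a = ∑ i ∈ s, a1 i ⊗ₜ[k] a2 i →
        act k A a (starProd k A Finv ℓ ℓ') =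
          ∑ i ∈ s, starProd k A Finv (act k A (a1 i) ℓ) (act k A (a2 i) ℓ')) :=
  ⟨fun a _ hℓ => act_mem_invForms k A a hℓ, act_act k A,
    fun _ ℓ _ ℓ' _ _ s a1 a2 hΔ => act_starProd k A Finv ℓ ℓ' s a1 a2 hΔ⟩
end

section
/- Under the standing assumptions on (A, B, F), let additionally A₊ ⊆ A be a subalgebra with Δ(A₊) ⊆ A₊ ⊗̄ A₊, write B₀ := B ∩ ker ε and A·B₀ for the k-submodule of A spanned by products a·b with a ∈ A, b ∈ B₀, and assume that F⁻¹ lies in ((A·B₀ + A₊) ⊗̄ A + A ⊗̄ (A·B₀)) ∩ ((A·B₀) ⊗̄ A + A ⊗̄ (A·B₀ + A₊)). Define I := {ℓ ∈ (A*)^B : ℓ(a₊) = 0 for all a₊ ∈ A₊}. Then I is a two-sided ideal of the algebra ((A*)^B, *): for every ℓ ∈ I and ℓ' ∈ (A*)^B, both ℓ * ℓ' and ℓ' * ℓ belong to I. -/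
open TensorProduct

variable (k A : Type*) [CommRing k] [Ring A] [Bialgebra k A]

/-- `A·B₀`: the `k`-submodule of `A` spanned by products `a·b` with `b ∈ B ∩ ker ε`. -/
def AB0 (B : Subalgebra k A) : Submodule k A :=
  Submodule.span k {z | ∃ a : A, ∃ b ∈ B, Coalgebra.counit (R := k) b = 0 ∧ z = a * b}

/-- `A·B₀` is a left ideal. -/
lemma AB0_mul_left (B : Subalgebra k A) (p : A) {s : A} (hs : s ∈ AB0 k A B) :
    p * s ∈ AB0 k A B := by
  induction hs using Submodule.span_induction with
  | mem z hz =>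
    obtain ⟨a, b, hb, hε, rfl⟩ := hz
    exact Submodule.subset_span ⟨p * a, b, hb, hε, (mul_assoc p a b).symm⟩
  | zero => simpa using (AB0 k A B).zero_mem
  | add x y _ _ hx hy => simpa [mul_add] using (AB0 k A B).add_mem hx hy
  | smul c x _ hx => simpa [mul_smul_comm] using (AB0 k A B).smul_mem c hx

/-- Multiplying an element of `Ap ⊗̄ Ap` into `S ⊗̄ A + A ⊗̄ T` stays there, provided
`S` and `T` are stable under left multiplication by `Ap`. -/
lemma mul_mem_locSup (Ap : Subalgebra k A) (S T : Submodule k A)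
    (hS : ∀ p ∈ Ap, ∀ s ∈ S, p * s ∈ S) (hT : ∀ p ∈ Ap, ∀ t ∈ T, p * t ∈ T)
    {x z : A ⊗[k] A} (hx : x ∈ tens2 k A (Ap : Set A) (Ap : Set A))
    (hz : z ∈ tens2 k A (S : Set A) Set.univ ⊔ tens2 k A Set.univ (T : Set A)) :
    x * z ∈ tens2 k A (S : Set A) Set.univ ⊔ tens2 k A Set.univ (T : Set A) := by
  set M := tens2 k A (S : Set A) Set.univ ⊔ tens2 k A Set.univ (T : Set A) with hM
  induction hx using Submodule.span_induction with
  | zero => simpa using M.zero_mem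
  | add x y _ _ hx hy => simpa [add_mul] using M.add_mem hx hy
  | smul c x _ hx => simpa [smul_mul_assoc] using M.smul_mem c hx
  | mem w hw =>
    obtain ⟨p, hp, q, hq, rfl⟩ := hw
    obtain ⟨z1, hz1, z2, hz2, rfl⟩ := Submodule.mem_sup.mp hz
    clear hz
    rw [mul_add]
    refine M.add_mem (Submodule.mem_sup_left ?_) (Submodule.mem_sup_right ?_)
    · induction hz1 using Submodule.span_induction with
      | mem u hu =>
        obtain ⟨s, hs, a, -, rfl⟩ := hu
        rw [Algebra.TensorProduct.tmul_mul_tmul]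
        exact Submodule.subset_span ⟨p * s, hS p hp s hs, q * a, trivial, rfl⟩
      | zero => simpa using Submodule.zero_mem _
      | add x y _ _ hx hy => simpa [mul_add] using Submodule.add_mem _ hx hy
      | smul c x _ hx => simpa [mul_smul_comm] using Submodule.smul_mem _ c hx
    · induction hz2 using Submodule.span_induction with
      | mem u hu =>
        obtain ⟨a, -, t, ht, rfl⟩ := hu
        rw [Algebra.TensorProduct.tmul_mul_tmul]
        exact Submodule.subset_span ⟨p * a, trivial, q * t, hT q hq t ht, rfl⟩
      | zero => simpa using Submodule.zero_mem _
      | add x y _ _ hx hy => simpa [mul_add] using Submodule.add_mem _ hx hy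
      | smul c x _ hx => simpa [mul_smul_comm] using Submodule.smul_mem _ c hx

/-- `pairForm ℓ ℓ'` vanishes on `S ⊗̄ A + A ⊗̄ T` if `ℓ` kills `S` and `ℓ'` kills `T`. -/
lemma pairForm_vanish (S T : Submodule k A) (ℓ ℓ' : A →ₗ[k] k)
    (hS : ∀ s ∈ S, ℓ s = 0) (hT : ∀ t ∈ T, ℓ' t = 0)
    {z : A ⊗[k] A}
    (hz : z ∈ tens2 k A (S : Set A) Set.univ ⊔ tens2 k A Set.univ (T : Set A)) :
    pairForm k A ℓ ℓ' z = 0 := by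
  obtain ⟨z1, hz1, z2, hz2, rfl⟩ := Submodule.mem_sup.mp hz
  have h1 : tens2 k A (S : Set A) Set.univ ≤ LinearMap.ker (pairForm k A ℓ ℓ') := by
    rw [tens2, Submodule.span_le]
    rintro _ ⟨s, hs, a, -, rfl⟩
    simp [pairForm, hS s hs]
  have h2 : tens2 k A Set.univ (T : Set A) ≤ LinearMap.ker (pairForm k A ℓ ℓ') := by
    rw [tens2, Submodule.span_le]
    rintro _ ⟨a, -, t, ht, rfl⟩
    simp [pairForm, hT t ht]
  have := h1 hz1
  have := h2 hz2
  simp_all [LinearMap.mem_ker]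

theorem stmt9 (B Ap : Subalgebra k A) (F Finv : A ⊗[k] A)
    (hinv1 : F * Finv = 1) (hinv2 : Finv * F = 1)
    (hcF1 : TensorProduct.lid k A (TensorProduct.map Coalgebra.counit LinearMap.id F) = 1)
    (hcF2 : TensorProduct.rid k A (TensorProduct.map LinearMap.id Coalgebra.counit F) = 1)
    (hFB : ∀ b ∈ B, F * Coalgebra.comul (R := k) b * Finv ∈ tens2 k A (B : Set A) (B : Set A))
    (hPhi : PhiB k A F Finv ∈ tens3 k A (B : Set A) (B : Set A) (B : Set A))
    -- `Δ(Ap) ⊆ Ap ⊗̄ Ap`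
    (hAp : ∀ a ∈ Ap, Coalgebra.comul (R := k) a ∈ tens2 k A (Ap : Set A) (Ap : Set A))
    -- `F⁻¹ ∈ ((A·B₀ + Ap) ⊗̄ A + A ⊗̄ (A·B₀)) ∩ ((A·B₀) ⊗̄ A + A ⊗̄ (A·B₀ + Ap))`
    (hFinvLoc : Finv ∈
      (tens2 k A ((AB0 k A B ⊔ Subalgebra.toSubmodule Ap : Submodule k A) : Set A) Set.univ ⊔
        tens2 k A Set.univ ((AB0 k A B : Submodule k A) : Set A)) ⊓
      (tens2 k A ((AB0 k A B : Submodule k A) : Set A) Set.univ ⊔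
        tens2 k A Set.univ ((AB0 k A B ⊔ Subalgebra.toSubmodule Ap : Submodule k A) : Set A))) :
    -- `I = {ℓ ∈ (A*)^B : ℓ(Ap) = 0}` is a two-sided ideal of `((A*)^B, *)`
    ∀ ℓ ∈ invForms k A (B : Set A), (∀ ap ∈ Ap, ℓ ap = 0) →
      ∀ ℓ' ∈ invForms k A (B : Set A),
        ((∀ ap ∈ Ap, starProd k A Finv ℓ ℓ' ap = 0) ∧
          (∀ ap ∈ Ap, starProd k A Finv ℓ' ℓ ap = 0)) := by
  intro ℓ hℓ hℓAp ℓ' hℓ'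
  set Q : Submodule k A := AB0 k A B ⊔ Subalgebra.toSubmodule Ap with hQdef
  -- linear forms in `(A*)^B` kill `A·B₀`
  have killAB0 : ∀ m : A →ₗ[k] k, m ∈ invForms k A (B : Set A) →
      ∀ s ∈ AB0 k A B, m s = 0 := by
    intro m hm s hs
    induction hs using Submodule.span_induction with
    | mem z hz =>
      obtain ⟨a, b, hb, hε, rfl⟩ := hz
      rw [hm a b hb, hε, mul_zero]
    | zero => simp
    | add x y _ _ hx hy => simp [hx, hy]
    | smul c x _ hx => simp [hx]
  -- `ℓ` kills `Q`
  have killQ : ∀ s ∈ Q, ℓ s = 0 := by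
    intro s hs
    obtain ⟨s1, hs1, s2, hs2, rfl⟩ := Submodule.mem_sup.mp hs
    rw [map_add, killAB0 ℓ hℓ s1 hs1, hℓAp s2 hs2, add_zero]
  -- closure properties under left multiplication by `Ap`
  have hclosAB0 : ∀ p ∈ Ap, ∀ t ∈ AB0 k A B, p * t ∈ AB0 k A B :=
    fun p _ t ht => AB0_mul_left k A B p ht
  have hclosQ : ∀ p ∈ Ap, ∀ s ∈ Q, p * s ∈ Q := by
    intro p hp s hs
    obtain ⟨s1, hs1, s2, hs2, rfl⟩ := Submodule.mem_sup.mp hs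
    rw [mul_add]
    exact Q.add_mem (Submodule.mem_sup_left (AB0_mul_left k A B p hs1))
      (Submodule.mem_sup_right (Ap.mul_mem hp hs2))
  constructor
  · intro ap hap
    have hmem := mul_mem_locSup k A Ap Q (AB0 k A B) hclosQ hclosAB0
      (hAp ap hap) hFinvLoc.1
    have := pairForm_vanish k A Q (AB0 k A B) ℓ ℓ' killQ (killAB0 ℓ' hℓ') hmem
    simpa [starProd, LinearMap.mulRight_apply] using this
  · intro ap hap
    have hmem := mul_mem_locSup k A Ap (AB0 k A B) Q hclosAB0 hclosQ
      (hAp ap hap) hFinvLoc.2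
    have := pairForm_vanish k A (AB0 k A B) Q ℓ' ℓ (killAB0 ℓ' hℓ') killQ hmem
    simpa [starProd, LinearMap.mulRight_apply] using this
end

section
/- Let k be a commutative ring, A a bialgebra over k with coproduct Δ and counit ε, B ⊆ A a subalgebra, B₀ := B ∩ ker ε, and F ∈ A ⊗ A invertible. Assume F⁻¹ − 1⊗1 lies in (A·B₀) ⊗̄ A + A ⊗̄ (A·B₀), where A·B₀ is the k-submodule of A spanned by products a·b with a ∈ A, b ∈ B₀. Then for all ℓ, ℓ' ∈ (A*)^B, the twisted product coincides with the convolution product: (ℓ ⊗ ℓ')(Δ(a)·F⁻¹) = (ℓ ⊗ ℓ')(Δ(a)) for every a ∈ A. -/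
open TensorProduct

variable (k A : Type*) [CommRing k] [Ring A] [Bialgebra k A]

/-- The convolution product `(ℓ ⊛ ℓ')(a) = (ℓ ⊗ ℓ')(Δ(a))`. -/
noncomputable def convProd (ℓ ℓ' : A →ₗ[k] k) : A →ₗ[k] k :=
  pairForm k A ℓ ℓ' ∘ₗ Coalgebra.comul

/-- auxiliary lemmas -/
lemma pairForm_tmul (ℓ ℓ' : A →ₗ[k] k) (x y : A) :
    pairForm k A ℓ ℓ' (x ⊗ₜ[k] y) = ℓ x * ℓ' y := by
  simp [pairForm, smul_eq_mul]

lemma key_left (B : Subalgebra k A) (ℓ ℓ' : A →ₗ[k] k)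
    (hℓ : ℓ ∈ invForms k A (B : Set A)) :
    ∀ z ∈ tens2 k A ((AB0 k A B : Submodule k A) : Set A) Set.univ,
      ∀ w : A ⊗[k] A, pairForm k A ℓ ℓ' (w * z) = 0 := by
  intro z hz
  induction hz using Submodule.span_induction with
  | mem z hz =>
    obtain ⟨x, hx, y, -, rfl⟩ := hz
    -- induct on x ∈ AB0
    have hx' : x ∈ AB0 k A B := hx
    clear hx
    induction hx' using Submodule.span_induction with
    | mem x hx =>
      obtain ⟨a, b, hb, hεb, rfl⟩ := hx
      intro w
      induction w using TensorProduct.induction_on with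
      | zero => simp
      | tmul u v =>
        rw [Algebra.TensorProduct.tmul_mul_tmul, pairForm_tmul, ← mul_assoc,
          hℓ (u * a) b hb, hεb, mul_zero, zero_mul]
      | add w₁ w₂ h1 h2 => rw [add_mul, map_add, h1, h2, add_zero]
    | zero => intro w; simp
    | add x₁ x₂ _ _ h1 h2 =>
      intro w
      rw [TensorProduct.add_tmul, mul_add, map_add, h1 w, h2 w, add_zero]
    | smul c x _ h =>
      intro w
      rw [← TensorProduct.smul_tmul', mul_smul_comm, map_smul, h w, smul_zero]
  | zero => intro w; simp
  | add z₁ z₂ _ _ h1 h2 =>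
    intro w; rw [mul_add, map_add, h1 w, h2 w, add_zero]
  | smul c z _ h =>
    intro w; rw [mul_smul_comm, map_smul, h w, smul_zero]

lemma key_right (B : Subalgebra k A) (ℓ ℓ' : A →ₗ[k] k)
    (hℓ' : ℓ' ∈ invForms k A (B : Set A)) :
    ∀ z ∈ tens2 k A Set.univ ((AB0 k A B : Submodule k A) : Set A),
      ∀ w : A ⊗[k] A, pairForm k A ℓ ℓ' (w * z) = 0 := by
  intro z hz
  induction hz using Submodule.span_induction with
  | mem z hz =>
    obtain ⟨x, -, y, hy, rfl⟩ := hz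
    have hy' : y ∈ AB0 k A B := hy
    clear hy
    induction hy' using Submodule.span_induction with
    | mem y hy =>
      obtain ⟨a, b, hb, hεb, rfl⟩ := hy
      intro w
      induction w using TensorProduct.induction_on with
      | zero => simp
      | tmul u v =>
        rw [Algebra.TensorProduct.tmul_mul_tmul, pairForm_tmul, ← mul_assoc,
          hℓ' (v * a) b hb, hεb, mul_zero, mul_zero]
      | add w₁ w₂ h1 h2 => rw [add_mul, map_add, h1, h2, add_zero]
    | zero => intro w; simp
    | add y₁ y₂ _ _ h1 h2 =>
      intro w
      rw [TensorProduct.tmul_add, mul_add, map_add, h1 w, h2 w, add_zero]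
    | smul c y _ h =>
      intro w
      rw [TensorProduct.tmul_smul, mul_smul_comm, map_smul, h w, smul_zero]
  | zero => intro w; simp
  | add z₁ z₂ _ _ h1 h2 =>
    intro w; rw [mul_add, map_add, h1 w, h2 w, add_zero]
  | smul c z _ h =>
    intro w; rw [mul_smul_comm, map_smul, h w, smul_zero]

theorem stmt12 (B : Subalgebra k A) (F Finv : A ⊗[k] A)
    (hinv1 : F * Finv = 1) (hinv2 : Finv * F = 1)
    -- `F⁻¹ − 1⊗1 ∈ (A·B₀) ⊗̄ A + A ⊗̄ (A·B₀)`
    (hFinvLoc : Finv - 1 ∈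
      tens2 k A ((AB0 k A B : Submodule k A) : Set A) Set.univ ⊔
        tens2 k A Set.univ ((AB0 k A B : Submodule k A) : Set A)) :
    -- the twisted product coincides with the convolution product on `(A*)^B`
    ∀ ℓ ∈ invForms k A (B : Set A), ∀ ℓ' ∈ invForms k A (B : Set A),
      starProd k A Finv ℓ ℓ' = convProd k A ℓ ℓ' := by
  intro ℓ hℓ ℓ' hℓ'
  rw [Submodule.mem_sup] at hFinvLoc
  obtain ⟨z₁, hz₁, z₂, hz₂, heq⟩ := hFinvLoc
  ext a
  have : (Coalgebra.comul a : A ⊗[k] A) * Finv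
      = Coalgebra.comul a + (Coalgebra.comul a * z₁ + Coalgebra.comul a * z₂) := by
    have : Finv = 1 + (z₁ + z₂) := by rw [heq]; abel
    rw [this, mul_add, mul_one, mul_add]
  simp only [starProd, convProd, LinearMap.comp_apply, LinearMap.mulRight_apply, this,
    map_add, key_left k A B ℓ ℓ' hℓ z₁ hz₁ _, key_right k A B ℓ ℓ' hℓ' z₂ hz₂ _,
    add_zero]
end

section
/- Let k be a commutative ring, A a bialgebra over k with coproduct Δ and counit ε, B ⊆ A a subalgebra, and F ∈ A ⊗ A invertible. Let u ∈ A be invertible, and set ᵘB := u·B·u⁻¹ and ᵘF := (u ⊗ u)·F·Δ(u)⁻¹. Define the products (ℓ * ℓ')(a) = (ℓ ⊗ ℓ')(Δ(a)·F⁻¹) on Hom_k(A,k) and (m *ᵤ m')(a) = (m ⊗ m')(Δ(a)·(ᵘF)⁻¹). Then the map i_u : Hom_k(A,k) → Hom_k(A,k), (i_u ℓ)(a) := ℓ(a·u), restricts to a k-linear bijection from (A*)^B onto (A*)^{ᵘB}, satisfies i_u(ℓ * ℓ') = i_u(ℓ) *ᵤ i_u(ℓ') for all ℓ, ℓ' ∈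 (A*)^B, and intertwines the A^op-actions: i_u(a • ℓ) = a • i_u(ℓ) for all a ∈ A, where (a • ℓ)(a') = ℓ(a·a'). -/
open TensorProduct

variable (k A : Type*) [CommRing k] [Ring A] [Bialgebra k A]

/-- The map `i_u : ℓ ↦ (a ↦ ℓ(a·u))`. -/
noncomputable def iMap (u : A) (ℓ : A →ₗ[k] k) : A →ₗ[k] k :=
  ℓ ∘ₗ LinearMap.mulRight k u


lemma pairForm_iMap (u : A) (ℓ ℓ' : A →ₗ[k] k) :
    pairForm k A (iMap k A u ℓ) (iMap k A u ℓ') =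
      (pairForm k A ℓ ℓ') ∘ₗ LinearMap.mulRight k (u ⊗ₜ[k] u) := by
  apply LinearMap.ext; intro z
  induction z using TensorProduct.induction_on with
  | zero => simp
  | tmul x y =>
      simp [pairForm, iMap, Algebra.TensorProduct.tmul_mul_tmul]
  | add x y hx hy =>
      simp only [map_add, LinearMap.coe_comp, Function.comp_apply,
        LinearMap.mulRight_apply, add_mul] at *
      rw [hx, hy]

theorem stmt13 (B : Subalgebra k A) (F Finv : A ⊗[k] A)
    (hinv1 : F * Finv = 1) (hinv2 : Finv * F = 1)
    -- `u` invertible with inverse `uinv`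
    (u uinv : A) (hu1 : u * uinv = 1) (hu2 : uinv * u = 1) :
    -- `ᵘB := u·B·u⁻¹`, `ᵘF := (u ⊗ u)·F·Δ(u)⁻¹`, `(ᵘF)⁻¹ = Δ(u)·F⁻¹·(u⁻¹ ⊗ u⁻¹)`
    ((u ⊗ₜ[k] u) * F * Coalgebra.comul (R := k) uinv) *
        (Coalgebra.comul (R := k) u * Finv * (uinv ⊗ₜ[k] uinv)) = 1 ∧
    (Coalgebra.comul (R := k) u * Finv * (uinv ⊗ₜ[k] uinv)) *
        ((u ⊗ₜ[k] u) * F * Coalgebra.comul (R := k) uinv) = 1 ∧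
    -- `i_u` maps `(A*)^B` into `(A*)^{ᵘB}`
    (∀ ℓ ∈ invForms k A (B : Set A),
      iMap k A u ℓ ∈ invForms k A {x : A | ∃ b ∈ B, x = u * b * uinv}) ∧
    -- with two-sided inverse `i_{u⁻¹}`, so `i_u` is a (k-linear) bijection of
    -- `(A*)^B` onto `(A*)^{ᵘB}`
    (∀ m ∈ invForms k A {x : A | ∃ b ∈ B, x = u * b * uinv},
      iMap k A uinv m ∈ invForms k A (B : Set A) ∧ iMap k A u (iMap k A uinv m) = m) ∧
    (∀ ℓ : A →ₗ[k] k, iMap k A uinv (iMap k A u ℓ) = ℓ) ∧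
    -- `i_u(ℓ * ℓ') = i_u(ℓ) *ᵤ i_u(ℓ')`
    (∀ ℓ ∈ invForms k A (B : Set A), ∀ ℓ' ∈ invForms k A (B : Set A),
      iMap k A u (starProd k A Finv ℓ ℓ') =
        starProd k A (Coalgebra.comul (R := k) u * Finv * (uinv ⊗ₜ[k] uinv))
          (iMap k A u ℓ) (iMap k A u ℓ')) ∧
    -- `i_u` intertwines the `A^op`-actions
    (∀ a : A, ∀ ℓ : A →ₗ[k] k, iMap k A u (act k A a ℓ) = act k A a (iMap k A u ℓ)) := by
  have hΔ1 : Coalgebra.comul (R := k) u * Coalgebra.comul (R := k) uinv = 1 := by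
    rw [← Bialgebra.comul_mul, hu1, Bialgebra.comul_one]
  have hΔ2 : Coalgebra.comul (R := k) uinv * Coalgebra.comul (R := k) u = 1 := by
    rw [← Bialgebra.comul_mul, hu2, Bialgebra.comul_one]
  have huu : (uinv ⊗ₜ[k] uinv) * (u ⊗ₜ[k] u) = 1 := by
    rw [Algebra.TensorProduct.tmul_mul_tmul, hu2]; rfl
  have huu' : (u ⊗ₜ[k] u) * (uinv ⊗ₜ[k] uinv) = 1 := by
    rw [Algebra.TensorProduct.tmul_mul_tmul, hu1]; rfl
  have hεu : Coalgebra.counit (R := k) u * Coalgebra.counit (R := k) uinv = 1 := by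
    rw [← Bialgebra.counit_mul, hu1, Bialgebra.counit_one]
  have hεconj : ∀ b : A, Coalgebra.counit (R := k) (u * b * uinv) =
      Coalgebra.counit (R := k) b := by
    intro b
    rw [Bialgebra.counit_mul, Bialgebra.counit_mul]
    calc Coalgebra.counit (R := k) u * Coalgebra.counit (R := k) b *
          Coalgebra.counit (R := k) uinv
        = (Coalgebra.counit (R := k) u * Coalgebra.counit (R := k) uinv) *
            Coalgebra.counit (R := k) b := by ring
      _ = Coalgebra.counit (R := k) b := by rw [hεu, one_mul]
  refine ⟨?_, ?_, ?_, ?_, ?_, ?_, ?_⟩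
  · calc ((u ⊗ₜ[k] u) * F * Coalgebra.comul (R := k) uinv) *
        (Coalgebra.comul (R := k) u * Finv * (uinv ⊗ₜ[k] uinv))
        = (u ⊗ₜ[k] u) * (F * ((Coalgebra.comul (R := k) uinv *
            Coalgebra.comul (R := k) u) * Finv)) * (uinv ⊗ₜ[k] uinv) := by
          simp only [mul_assoc]
      _ = 1 := by rw [hΔ2, one_mul, hinv1, mul_one, huu']
  · calc (Coalgebra.comul (R := k) u * Finv * (uinv ⊗ₜ[k] uinv)) *
        ((u ⊗ₜ[k] u) * F * Coalgebra.comul (R := k) uinv)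
        = Coalgebra.comul (R := k) u * (Finv * (((uinv ⊗ₜ[k] uinv) * (u ⊗ₜ[k] u)) * F)) *
            Coalgebra.comul (R := k) uinv := by simp only [mul_assoc]
      _ = 1 := by rw [huu, one_mul, hinv2, mul_one, hΔ1]
  · intro ℓ hℓ a x hx
    obtain ⟨b, hb, rfl⟩ := hx
    simp only [iMap, LinearMap.coe_comp, Function.comp_apply, LinearMap.mulRight_apply]
    have : a * (u * b * uinv) * u = (a * u) * b * (uinv * u) := by
      simp only [mul_assoc]
    rw [this, hu2, mul_one, hℓ _ b hb, hεconj]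
  · intro m hm
    constructor
    · intro a b hb
      simp only [iMap, LinearMap.coe_comp, Function.comp_apply, LinearMap.mulRight_apply]
      have : a * b * uinv = (a * uinv) * (u * b * uinv) := by
        calc a * b * uinv = a * ((uinv * u) * b) * uinv := by rw [hu2, one_mul]
          _ = (a * uinv) * (u * b * uinv) := by simp only [mul_assoc]
      rw [this, hm _ _ ⟨b, hb, rfl⟩, hεconj]
    · apply LinearMap.ext; intro a
      simp only [iMap, LinearMap.coe_comp, Function.comp_apply, LinearMap.mulRight_apply,
        mul_assoc, hu1, mul_one]
  · intro ℓ
    apply LinearMap.ext; intro a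
    simp only [iMap, LinearMap.coe_comp, Function.comp_apply, LinearMap.mulRight_apply,
      mul_assoc, hu2, mul_one]
  · intro ℓ _ ℓ' _
    apply LinearMap.ext; intro a
    simp only [iMap, starProd, LinearMap.coe_comp, Function.comp_apply,
      LinearMap.mulRight_apply]
    rw [show (ℓ ∘ₗ LinearMap.mulRight k u) = iMap k A u ℓ from rfl,
      show (ℓ' ∘ₗ LinearMap.mulRight k u) = iMap k A u ℓ' from rfl,
      pairForm_iMap k A u ℓ ℓ', Bialgebra.comul_mul]
    simp only [LinearMap.coe_comp, Function.comp_apply, LinearMap.mulRight_apply]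
    congr 1
    symm
    calc Coalgebra.comul (R := k) a * (Coalgebra.comul (R := k) u * Finv *
          (uinv ⊗ₜ[k] uinv)) * (u ⊗ₜ[k] u)
        = Coalgebra.comul (R := k) a * Coalgebra.comul (R := k) u * Finv *
            ((uinv ⊗ₜ[k] uinv) * (u ⊗ₜ[k] u)) := by simp only [mul_assoc]
      _ = Coalgebra.comul (R := k) a * Coalgebra.comul (R := k) u * Finv := by
          rw [huu, mul_one]
  · intro a ℓ
    apply LinearMap.ext; intro x
    simp only [iMap, act, LinearMap.coe_comp, Function.comp_apply, LinearMap.mulRight_apply,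
      LinearMap.mulLeft_apply, mul_assoc]
end
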